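/- arXiv:2512.05324 — 3 statements merged into one kernel-verified Lean document; each statement's English description precedes it below -/
import Mathlib

section
/- Let X, Y ⊂ R^n be closed convex sets with S := X ∩ Y ≠ ∅, and let z be centralized. With c := P_{S_X^z ∩ S_Y^z}(z) (equal to PCRM(z)), it holds for every s ∈ S that ‖s − c‖² ≤ ‖s − z‖² − max{δ(z), δ(c)}², where δ(w) := max{dist(w,X), dist(w,Y)}. -/
open Metric Filter Topology
open scoped RealInnerProductSpace

/-!
Since `s ∈ X ∩ Y` lies in both supporting half-spaces and `c` is the projection of `z` onto their
intersection, the angle at `c` in the triangle `s c z` is obtuse, so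
`‖s - c‖² + ‖z - c‖² ≤ ‖s - z‖²`. It remains to bound the four distances by `‖z - c‖`:
`c` lies in `S_X^z`, so the angle at `P_X(z)` in the triangle `z P_X(z) c` is obtuse and both
`dist(z, X) ≤ ‖z - P_X(z)‖` and `dist(c, X) ≤ ‖c - P_X(z)‖` are at most `‖z - c‖`; likewise for `Y`.
-/

section

variable {E : Type*} [NormedAddCommGroup E] [InnerProductSpace ℝ E]

theorem norm_sub_sq_add_norm_sub_sq_le_of_inner_nonpos {x y a : E} (h : ⟪x - a, y - a⟫ ≤ 0) :
    ‖x - a‖ ^ 2 + ‖y - a‖ ^ 2 ≤ ‖x - y‖ ^ 2 := by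
  have hxy : x - y = (x - a) - (y - a) := by abel
  rw [hxy, norm_sub_sq_real (x - a) (y - a)]
  linarith

theorem infDist_le_dist_of_inner_nonpos {X : Set E} {x y a : E} (ha : a ∈ X)
    (h : ⟪x - a, y - a⟫ ≤ 0) :
    infDist x X ≤ dist x y ∧ infDist y X ≤ dist x y := by
  have hsq := norm_sub_sq_add_norm_sub_sq_le_of_inner_nonpos h
  have hxa : dist x a ≤ dist x y := by
    simp only [dist_eq_norm]
    nlinarith [norm_nonneg (x - a), norm_nonneg (x - y), sq_nonneg ‖y - a‖]
  have hya : dist y a ≤ dist x y := by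
    simp only [dist_eq_norm]
    nlinarith [norm_nonneg (y - a), norm_nonneg (x - y), sq_nonneg ‖x - a‖]
  exact ⟨(infDist_le_dist_of_mem ha).trans hxa, (infDist_le_dist_of_mem ha).trans hya⟩

end

theorem stmt_10_general {n : ℕ} {X Y : Set (EuclideanSpace ℝ (Fin n))}
    (PX PY : EuclideanSpace ℝ (Fin n) → EuclideanSpace ℝ (Fin n))
    (hPX : ∀ u, PX u ∈ X ∧ ∀ x ∈ X, ⟪u - PX u, x - PX u⟫ ≤ 0)
    (hPY : ∀ u, PY u ∈ Y ∧ ∀ x ∈ Y, ⟪u - PY u, x - PY u⟫ ≤ 0)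
    (z : EuclideanSpace ℝ (Fin n))
    (c : EuclideanSpace ℝ (Fin n))
    (hcmem : c ∈ {w | ⟪w - PX z, z - PX z⟫ ≤ 0} ∩ {w | ⟪w - PY z, z - PY z⟫ ≤ 0})
    (hcproj : ∀ w ∈ {w | ⟪w - PX z, z - PX z⟫ ≤ 0} ∩ {w | ⟪w - PY z, z - PY z⟫ ≤ 0},
      ⟪z - c, w - c⟫ ≤ 0) :
    ∀ s ∈ X ∩ Y, ‖s - c‖ ^ 2 ≤ ‖s - z‖ ^ 2 -
      (max (max (infDist z X) (infDist z Y)) (max (infDist c X) (infDist c Y))) ^ 2 := by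
  rintro s ⟨hsX, hsY⟩
  have hs_half : ⟪s - PX z, z - PX z⟫ ≤ 0 ∧ ⟪s - PY z, z - PY z⟫ ≤ 0 :=
    ⟨real_inner_comm (s - PX z) _ ▸ (hPX z).2 s hsX,
      real_inner_comm (s - PY z) _ ▸ (hPY z).2 s hsY⟩
  obtain ⟨hcX, hzX⟩ := infDist_le_dist_of_inner_nonpos (hPX z).1 hcmem.1
  obtain ⟨hcY, hzY⟩ := infDist_le_dist_of_inner_nonpos (hPY z).1 hcmem.2
  set M := max (max (infDist z X) (infDist z Y)) (max (infDist c X) (infDist c Y))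
  have hM : M ≤ ‖z - c‖ := by
    rw [← dist_eq_norm, dist_comm]
    exact max_le (max_le hzX hzY) (max_le hcX hcY)
  have hM_nonneg : 0 ≤ M := le_max_of_le_left (le_max_of_le_left infDist_nonneg)
  have hobtuse := norm_sub_sq_add_norm_sub_sq_le_of_inner_nonpos (hcproj s hs_half)
  rw [norm_sub_rev z s] at hobtuse
  nlinarith [pow_le_pow_left₀ hM_nonneg hM 2]

theorem stmt_10 {n : ℕ} {X Y : Set (EuclideanSpace ℝ (Fin n))}
    (hXc : IsClosed X) (hXconv : Convex ℝ X)
    (hYc : IsClosed Y) (hYconv : Convex ℝ Y)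
    (hS : (X ∩ Y).Nonempty)
    (PX PY : EuclideanSpace ℝ (Fin n) → EuclideanSpace ℝ (Fin n))
    (hPX : ∀ u, PX u ∈ X ∧ ∀ x ∈ X, ⟪u - PX u, x - PX u⟫ ≤ 0)
    (hPY : ∀ u, PY u ∈ Y ∧ ∀ x ∈ Y, ⟪u - PY u, x - PY u⟫ ≤ 0)
    (z : EuclideanSpace ℝ (Fin n))
    (hcent : ⟪z - PX z, z - PY z⟫ ≤ 0)
    (c : EuclideanSpace ℝ (Fin n))
    (hcmem : c ∈ {w | ⟪w - PX z, z - PX z⟫ ≤ 0} ∩ {w | ⟪w - PY z, z - PY z⟫ ≤ 0})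
    (hcproj : ∀ w ∈ {w | ⟪w - PX z, z - PX z⟫ ≤ 0} ∩ {w | ⟪w - PY z, z - PY z⟫ ≤ 0},
      ⟪z - c, w - c⟫ ≤ 0) :
    ∀ s ∈ X ∩ Y, ‖s - c‖ ^ 2 ≤ ‖s - z‖ ^ 2 -
      (max (max (infDist z X) (infDist z Y)) (max (infDist c X) (infDist c Y))) ^ 2 :=
  stmt_10_general PX PY hPX hPY z c hcmem hcproj
end

section
/- Let X, Y ⊂ R^n be closed convex sets with S := X ∩ Y ≠ ∅, let T be an admissible operator (Im T ⊂ Y and quasi-nonexpansive w.r.t. S), let (α_k) ⊂ (0,1) be arbitrary, and define the ecCRM iterates z_{k+1} := PCRM(N^{α_k}(z_k)) with N^α := αT + (1−α)P_X T, starting from any z_0 ∈ R^n. Then (z_k) is Fejér monotone with respect to S and converges to a point of S. -/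
/-!
Since `N^α(z)` lies on the segment from `T z ∈ Y` to its projection onto `X`, it is centralized,
so `z_{k+1}` is its projection onto `S_X ∩ S_Y ⊇ X ∩ Y`. Pythagoras then gives
`‖z_{k+1} - s‖² + ‖N^α(z_k) - z_{k+1}‖² ≤ ‖z_k - s‖²` for `s ∈ X ∩ Y`: the sequence is Fejér
monotone and the steps tend to zero. As `z_{k+1}` lies in both half-spaces, its distances to `X`
and `Y` are at most twice the step, so every cluster point lies in `X ∩ Y`; a Fejér monotone
sequence converges to any of its cluster points in the target set.
-/

open Metric Filter Topology
open scoped RealInnerProductSpace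

section Projection

variable {E : Type*} [NormedAddCommGroup E] [InnerProductSpace ℝ E]

def IsMetricProj (K : Set E) (u p : E) : Prop :=
  p ∈ K ∧ ∀ x ∈ K, ⟪u - p, x - p⟫ ≤ 0

/-- `halfspace (P_X w) w` is the supporting half-space `S_X^w` of the paper. -/
def halfspace (p u : E) : Set E :=
  {v | ⟪v - p, u - p⟫ ≤ 0}

theorem sq_norm_sub_add_sq_norm_sub_le {u p s : E} (h : ⟪u - p, s - p⟫ ≤ 0) :
    ‖p - s‖ ^ 2 + ‖u - p‖ ^ 2 ≤ ‖u - s‖ ^ 2 := by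
  have hexp : ‖u - s‖ ^ 2 = ‖u - p‖ ^ 2 - 2 * ⟪u - p, s - p⟫ + ‖s - p‖ ^ 2 := by
    rw [← norm_sub_sq_real, sub_sub_sub_cancel_right]
  rw [hexp, norm_sub_rev p s]
  linarith

theorem norm_sub_le_of_inner_nonpos {u p s : E} (h : ⟪u - p, s - p⟫ ≤ 0) :
    ‖u - p‖ ≤ ‖u - s‖ :=
  (sq_le_sq₀ (norm_nonneg _) (norm_nonneg _)).mp <| by
    nlinarith [sq_norm_sub_add_sq_norm_sub_le h, sq_nonneg ‖p - s‖]

namespace IsMetricProj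

variable {K : Set E} {u p : E}

theorem subset_halfspace (hp : IsMetricProj K u p) : K ⊆ halfspace p u := fun x hx =>
  (real_inner_comm _ _).trans_le (hp.2 x hx)

theorem unique {q : E} (hp : IsMetricProj K u p) (hq : IsMetricProj K u q) : p = q := by
  have h := add_nonpos (hp.2 q hq.1) (hq.2 p hp.1)
  rw [← neg_sub q p, inner_neg_right, ← sub_eq_add_neg, ← inner_sub_left,
    sub_sub_sub_cancel_left, real_inner_self_nonpos, sub_eq_zero] at h
  exact h.symm

theorem norm_sub_le (hp : IsMetricProj K u p) {s : E} (hs : s ∈ K) : ‖p - s‖ ≤ ‖u - s‖ :=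
  (sq_le_sq₀ (norm_nonneg _) (norm_nonneg _)).mp <| by
    nlinarith [sq_norm_sub_add_sq_norm_sub_le (hp.2 s hs), sq_nonneg ‖u - p‖]

theorem combo_self {α : ℝ} (hp : IsMetricProj K u p) (hα : 0 ≤ α) :
    IsMetricProj K (α • u + (1 - α) • p) p := by
  refine ⟨hp.1, fun x hx => ?_⟩
  have : α • u + (1 - α) • p - p = α • (u - p) := by module
  rw [this, real_inner_smul_left]
  exact mul_nonpos_of_nonneg_of_nonpos hα (hp.2 x hx)

theorem norm_combo_sub_le {α : ℝ} (hp : IsMetricProj K u p) (hα₀ : 0 ≤ α) (hα₁ : α ≤ 1)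
    {s : E} (hs : s ∈ K) : ‖α • u + (1 - α) • p - s‖ ≤ ‖u - s‖ := by
  have hu : u ∈ closedBall s ‖u - s‖ := by rw [mem_closedBall, dist_eq_norm]
  have hp' : p ∈ closedBall s ‖u - s‖ := by
    rw [mem_closedBall, dist_eq_norm]
    exact hp.norm_sub_le hs
  simpa [dist_eq_norm] using convex_closedBall s ‖u - s‖ hu hp' hα₀ (by linarith) (by ring)

/-- The centralization lemma: `N^α(z) = α • T z + (1 - α) • P_X (T z)` is centralized when
`T z ∈ Y`, because `P_X (N^α(z)) = P_X (T z)`. -/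
theorem inner_nonpos_of_combo {Y : Set E} {α : ℝ} {px py : E} (hp : IsMetricProj K u p)
    (hpx : IsMetricProj K (α • u + (1 - α) • p) px)
    (hpy : IsMetricProj Y (α • u + (1 - α) • p) py) (huY : u ∈ Y) (hα₀ : 0 ≤ α) (hα₁ : α < 1) :
    ⟪α • u + (1 - α) • p - px, α • u + (1 - α) • p - py⟫ ≤ 0 := by
  set w := α • u + (1 - α) • p
  obtain rfl : p = px := (hp.combo_self hα₀).unique hpx
  have hwp : w - p = α • (u - p) := by simp only [w]; module
  have huw : u - py = (1 - α) • (u - p) + (w - py) := by simp only [w]; module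
  have hY : (1 - α) * ⟪w - py, u - p⟫ + ‖w - py‖ ^ 2 ≤ 0 := by
    have := hpy.2 u huY
    rwa [huw, inner_add_right, real_inner_smul_right, real_inner_self_eq_norm_sq] at this
  have : ⟪w - py, u - p⟫ ≤ 0 := by nlinarith [sq_nonneg ‖w - py‖]
  rw [hwp, real_inner_smul_left, real_inner_comm]
  exact mul_nonpos_of_nonneg_of_nonpos hα₀ this

theorem infDist_le_two_mul {w c : E} (hp : IsMetricProj K w p) (hc : c ∈ halfspace p w) :
    infDist c K ≤ 2 * ‖w - c‖ := by
  have hwp : ‖w - p‖ ≤ ‖w - c‖ := norm_sub_le_of_inner_nonpos ((real_inner_comm _ _).trans_le hc)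
  calc infDist c K ≤ dist c p := infDist_le_dist_of_mem hp.1
    _ ≤ dist c w + dist w p := dist_triangle _ _ _
    _ ≤ 2 * ‖w - c‖ := by rw [dist_eq_norm, dist_eq_norm, norm_sub_rev]; linarith

end IsMetricProj

end Projection

section Fejer

theorem tendsto_zero_of_add_sq_le {A b : ℕ → ℝ} (hA : ∀ k, 0 ≤ A k)
    (h : ∀ k, A (k + 1) + b k ^ 2 ≤ A k) : Tendsto b atTop (𝓝 0) := by
  have hanti : Antitone A := antitone_nat_of_succ_le fun k => by nlinarith [h k, sq_nonneg (b k)]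
  have hlim := tendsto_atTop_ciInf hanti ⟨0, by rintro _ ⟨k, rfl⟩; exact hA k⟩
  have hdiff : Tendsto (fun k => A k - A (k + 1)) atTop (𝓝 0) := by
    simpa using hlim.sub (hlim.comp (tendsto_add_atTop_nat 1))
  refine squeeze_zero_norm (fun k => ?_) (by simpa using hdiff.sqrt)
  rw [Real.norm_eq_abs, ← Real.sqrt_sq_eq_abs]
  exact Real.sqrt_le_sqrt (by linarith [h k])

theorem mem_of_mapClusterPt_of_tendsto_infDist {X : Type*} [PseudoMetricSpace X] {K : Set X}
    (hK : IsClosed K) (hne : K.Nonempty) {z : ℕ → X} {p : X} (hp : MapClusterPt p atTop z)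
    (h : Tendsto (fun k => infDist (z k) K) atTop (𝓝 0)) : p ∈ K := by
  have hclust : MapClusterPt (infDist p K) atTop (fun k => infDist (z k) K) :=
    hp.tendsto_comp (f := fun x => infDist x K) ((continuous_infDist_pt K).tendsto p)
  have h0 : infDist p K = 0 := eq_of_nhds_neBot (hclust.neBot.mono (inf_le_inf_left _ h))
  rw [← hK.closure_eq]
  exact (mem_closure_iff_infDist_zero hne).2 h0

variable {X : Type*} [MetricSpace X]

theorem tendsto_of_antitone_dist_of_mapClusterPt {z : ℕ → X} {p : X}
    (hanti : Antitone fun k => dist (z k) p) (hp : MapClusterPt p atTop z) :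
    Tendsto z atTop (𝓝 p) := by
  refine Metric.tendsto_atTop.2 fun ε hε => ?_
  obtain ⟨N, hN⟩ := (hp.frequently (ball_mem_nhds p hε)).exists
  exact ⟨N, fun k hk => (hanti hk).trans_lt hN⟩

theorem exists_tendsto_of_fejer [ProperSpace X] {S : Set X} {z : ℕ → X} (hS : S.Nonempty)
    (hfejer : ∀ s ∈ S, ∀ k, dist (z (k + 1)) s ≤ dist (z k) s)
    (hclust : ∀ p, MapClusterPt p atTop z → p ∈ S) : ∃ p ∈ S, Tendsto z atTop (𝓝 p) := by
  obtain ⟨s₀, hs₀⟩ := hS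
  have hbdd : ∀ k, z k ∈ closedBall s₀ (dist (z 0) s₀) := fun k =>
    antitone_nat_of_succ_le (f := fun k => dist (z k) s₀) (hfejer s₀ hs₀) (Nat.zero_le k)
  obtain ⟨p, -, hp⟩ := (isCompact_closedBall s₀ _).exists_mapClusterPt (f := atTop)
    (tendsto_principal.2 (.of_forall hbdd))
  have hpS := hclust p hp
  exact ⟨p, hpS, tendsto_of_antitone_dist_of_mapClusterPt
    (antitone_nat_of_succ_le (hfejer p hpS)) hp⟩

end Fejer

theorem stmt_12_general {n : ℕ} {X Y : Set (EuclideanSpace ℝ (Fin n))}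
    (hXc : IsClosed X)
    (hYc : IsClosed Y)
    (hS : (X ∩ Y).Nonempty)
    (PX PY : EuclideanSpace ℝ (Fin n) → EuclideanSpace ℝ (Fin n))
    (hPX : ∀ u, PX u ∈ X ∧ ∀ x ∈ X, ⟪u - PX u, x - PX u⟫ ≤ 0)
    (hPY : ∀ u, PY u ∈ Y ∧ ∀ x ∈ Y, ⟪u - PY u, x - PY u⟫ ≤ 0)
    (T : EuclideanSpace ℝ (Fin n) → EuclideanSpace ℝ (Fin n))
    (hTY : ∀ u, T u ∈ Y)
    (hTqne : ∀ u, ∀ s ∈ X ∩ Y, ‖T u - s‖ ≤ ‖u - s‖)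
    (C : EuclideanSpace ℝ (Fin n) → EuclideanSpace ℝ (Fin n))
    -- for centralized points, C is the projection onto the intersection of the
    -- two supporting half-spaces (this characterizes PCRM at such points)
    (hC : ∀ w : EuclideanSpace ℝ (Fin n), ⟪w - PX w, w - PY w⟫ ≤ 0 →
      C w ∈ {v | ⟪v - PX w, w - PX w⟫ ≤ 0} ∩ {v | ⟪v - PY w, w - PY w⟫ ≤ 0} ∧
      ∀ v ∈ {v | ⟪v - PX w, w - PX w⟫ ≤ 0} ∩ {v | ⟪v - PY w, w - PY w⟫ ≤ 0},
        ⟪w - C w, v - C w⟫ ≤ 0)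
    (α : ℕ → ℝ) (hα : ∀ k, α k ∈ Set.Ioo (0:ℝ) 1)
    (z : ℕ → EuclideanSpace ℝ (Fin n))
    (hz : ∀ k, z (k+1) = C (α k • T (z k) + (1 - α k) • PX (T (z k)))) :
    (∀ s ∈ X ∩ Y, ∀ k : ℕ, ‖z (k+1) - s‖ ≤ ‖z k - s‖) ∧
      ∃ p ∈ X ∩ Y, Tendsto z atTop (𝓝 p) := by
  replace hPX : ∀ u, IsMetricProj X u (PX u) := hPX
  replace hPY : ∀ u, IsMetricProj Y u (PY u) := hPY
  set w := fun k => α k • T (z k) + (1 - α k) • PX (T (z k))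
  have hproj : ∀ k, IsMetricProj (halfspace (PX (w k)) (w k) ∩ halfspace (PY (w k)) (w k))
      (w k) (z (k + 1)) := fun k => hz k ▸ hC (w k) <|
    (hPX _).inner_nonpos_of_combo (hPX _) (hPY _) (hTY _) (hα k).1.le (hα k).2
  have hstep : ∀ s ∈ X ∩ Y, ∀ k, ‖z (k + 1) - s‖ ^ 2 + ‖w k - z (k + 1)‖ ^ 2 ≤ ‖z k - s‖ ^ 2 :=
    fun s hs k => (sq_norm_sub_add_sq_norm_sub_le ((hproj k).2 s
      ⟨(hPX _).subset_halfspace hs.1, (hPY _).subset_halfspace hs.2⟩)).trans <| by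
        gcongr
        exact ((hPX _).norm_combo_sub_le (hα k).1.le (hα k).2.le hs.1).trans (hTqne _ s hs)
  have hfejer : ∀ s ∈ X ∩ Y, ∀ k, ‖z (k + 1) - s‖ ≤ ‖z k - s‖ := fun s hs k =>
    (sq_le_sq₀ (norm_nonneg _) (norm_nonneg _)).mp <| by
      nlinarith [hstep s hs k, sq_nonneg ‖w k - z (k + 1)‖]
  obtain ⟨s₀, hs₀⟩ := hS
  have hgap : Tendsto (fun k => 2 * ‖w k - z (k + 1)‖) atTop (𝓝 0) := by
    simpa using (tendsto_zero_of_add_sq_le (A := fun k => ‖z k - s₀‖ ^ 2) (fun k => sq_nonneg _)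
      (hstep s₀ hs₀)).const_mul 2
  have hX : Tendsto (fun k => infDist (z k) X) atTop (𝓝 0) :=
    (tendsto_add_atTop_iff_nat 1).1 <| squeeze_zero (fun _ => infDist_nonneg)
      (fun k => (hPX _).infDist_le_two_mul (hproj k).1.1) hgap
  have hY : Tendsto (fun k => infDist (z k) Y) atTop (𝓝 0) :=
    (tendsto_add_atTop_iff_nat 1).1 <| squeeze_zero (fun _ => infDist_nonneg)
      (fun k => (hPY _).infDist_le_two_mul (hproj k).1.2) hgap
  refine ⟨hfejer, exists_tendsto_of_fejer ⟨s₀, hs₀⟩ (by simpa [dist_eq_norm] using hfejer)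
    fun p hp => ?_⟩
  exact ⟨mem_of_mapClusterPt_of_tendsto_infDist hXc ⟨s₀, hs₀.1⟩ hp hX,
    mem_of_mapClusterPt_of_tendsto_infDist hYc ⟨s₀, hs₀.2⟩ hp hY⟩

theorem stmt_12 {n : ℕ} {X Y : Set (EuclideanSpace ℝ (Fin n))}
    (hXc : IsClosed X) (hXconv : Convex ℝ X)
    (hYc : IsClosed Y) (hYconv : Convex ℝ Y)
    (hS : (X ∩ Y).Nonempty)
    (PX PY : EuclideanSpace ℝ (Fin n) → EuclideanSpace ℝ (Fin n))
    (hPX : ∀ u, PX u ∈ X ∧ ∀ x ∈ X, ⟪u - PX u, x - PX u⟫ ≤ 0)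
    (hPY : ∀ u, PY u ∈ Y ∧ ∀ x ∈ Y, ⟪u - PY u, x - PY u⟫ ≤ 0)
    (T : EuclideanSpace ℝ (Fin n) → EuclideanSpace ℝ (Fin n))
    (hTY : ∀ u, T u ∈ Y)
    (hTqne : ∀ u, ∀ s ∈ X ∩ Y, ‖T u - s‖ ≤ ‖u - s‖)
    (C : EuclideanSpace ℝ (Fin n) → EuclideanSpace ℝ (Fin n))
    -- for centralized points, C is the projection onto the intersection of the
    -- two supporting half-spaces (this characterizes PCRM at such points)
    (hC : ∀ w : EuclideanSpace ℝ (Fin n), ⟪w - PX w, w - PY w⟫ ≤ 0 →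
      C w ∈ {v | ⟪v - PX w, w - PX w⟫ ≤ 0} ∩ {v | ⟪v - PY w, w - PY w⟫ ≤ 0} ∧
      ∀ v ∈ {v | ⟪v - PX w, w - PX w⟫ ≤ 0} ∩ {v | ⟪v - PY w, w - PY w⟫ ≤ 0},
        ⟪w - C w, v - C w⟫ ≤ 0)
    (α : ℕ → ℝ) (hα : ∀ k, α k ∈ Set.Ioo (0:ℝ) 1)
    (z : ℕ → EuclideanSpace ℝ (Fin n))
    (hz : ∀ k, z (k+1) = C (α k • T (z k) + (1 - α k) • PX (T (z k)))) :
    (∀ s ∈ X ∩ Y, ∀ k : ℕ, ‖z (k+1) - s‖ ≤ ‖z k - s‖) ∧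
      ∃ p ∈ X ∩ Y, Tendsto z atTop (𝓝 p) :=
  stmt_12_general hXc hYc hS PX PY hPX hPY T hTY hTqne C hC α hα z hz
end

section
/- Let X, Y ⊂ R^n be closed convex with S := X ∩ Y having nonempty interior, and let z̄ ∈ ∂X ∩ ∂Y be such that ∂X and ∂Y are C¹ manifolds of dimension n−1 near z̄. Let (w_k) be a sequence of strictly centralized points converging to z̄. Then dist(PCRM(w_k), S)/dist(w_k, S) → 0. -/
open Metric Filter Topology Asymptotics
open scoped RealInnerProductSpace Gradient

/-!
Let `a = P_X w` and `p = P_X (PCRM w)`, with `u`, `v` the unit outer normals of `X` at `p` and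
`a`. Since `PCRM w` lies in the supporting half-space at `a`,
`dist (PCRM w, X) = ⟪PCRM w - p, u⟫ ≤ ⟪PCRM w - a, u - v⟫ ≤ ‖PCRM w - a‖ ‖u - v‖`.
Near `z̄` the unit outer normal is a continuous function of the boundary point (Lagrange
multipliers force it to be `± ∇g / ‖∇g‖`, and an interior point of `X` fixes the sign), so
`‖u - v‖ → 0`, while `‖PCRM w - a‖ ≤ 2 dist (w, S)`. Hence `dist (PCRM w, X)` and likewise
`dist (PCRM w, Y)` are `o (dist (w, S))`, and the error bound transfers this to `dist (PCRM w, S)`.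
-/

section Projection

variable {E : Type*} [NormedAddCommGroup E] [InnerProductSpace ℝ E]

lemma norm_sub_sq_add_norm_sub_sq_le {w c x : E} (h : ⟪w - c, x - c⟫ ≤ 0) :
    ‖w - c‖ ^ 2 + ‖x - c‖ ^ 2 ≤ ‖w - x‖ ^ 2 := by
  have hsplit : w - x = (w - c) - (x - c) := by abel
  rw [hsplit, norm_sub_sq_real (w - c) (x - c)]
  linarith

lemma norm_sub_le_infDist_of_inner_nonpos {s : Set E} {w c : E} (hs : s.Nonempty)
    (h : ∀ x ∈ s, ⟪w - c, x - c⟫ ≤ 0) : ‖w - c‖ ≤ infDist w s := by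
  refine (le_infDist hs).2 fun x hx => ?_
  rw [dist_eq_norm]
  have := norm_sub_sq_add_norm_sub_sq_le (h x hx)
  exact pow_le_pow_iff_left₀ (norm_nonneg _) (norm_nonneg _) two_ne_zero |>.1
    (by nlinarith [sq_nonneg ‖x - c‖])

variable {X : Set E} {P : E → E}

lemma infDist_eq_norm_sub_proj (hP : ∀ u, P u ∈ X ∧ ∀ x ∈ X, ⟪u - P u, x - P u⟫ ≤ 0) (u : E) :
    infDist u X = ‖u - P u‖ :=
  le_antisymm (by simpa [dist_eq_norm] using infDist_le_dist_of_mem (hP u).1)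
    (norm_sub_le_infDist_of_inner_nonpos ⟨_, (hP u).1⟩ (hP u).2)

lemma proj_eq_self (hP : ∀ u, P u ∈ X ∧ ∀ x ∈ X, ⟪u - P u, x - P u⟫ ≤ 0) {x : E}
    (hx : x ∈ X) : P x = x := by
  have h := infDist_eq_norm_sub_proj hP x
  rw [infDist_zero_of_mem hx, eq_comm, norm_eq_zero, sub_eq_zero] at h
  exact h.symm

lemma tendsto_proj_nhds (hP : ∀ u, P u ∈ X ∧ ∀ x ∈ X, ⟪u - P u, x - P u⟫ ≤ 0) {z : E}
    (hz : z ∈ X) : Tendsto P (𝓝 z) (𝓝 z) := by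
  refine tendsto_nhds_nhds.2 fun ε hε => ⟨ε, hε, fun y hy => lt_of_le_of_lt ?_ hy⟩
  rw [dist_eq_norm, dist_eq_norm, norm_sub_rev]
  have := norm_sub_sq_add_norm_sub_sq_le ((hP y).2 z hz)
  exact pow_le_pow_iff_left₀ (norm_nonneg _) (norm_nonneg _) two_ne_zero |>.1
    (by nlinarith [sq_nonneg ‖y - P y‖])

lemma inner_sub_proj_smul_nonpos (hP : ∀ u, P u ∈ X ∧ ∀ x ∈ X, ⟪u - P u, x - P u⟫ ≤ 0)
    (y : E) {x : E} (hx : x ∈ X) : ⟪x - P y, ‖y - P y‖⁻¹ • (y - P y)⟫ ≤ 0 := by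
  rw [real_inner_smul_right, real_inner_comm]
  exact mul_nonpos_of_nonneg_of_nonpos (by positivity) ((hP y).2 x hx)

lemma infDist_le_norm_mul_norm_sub (hP : ∀ u, P u ∈ X ∧ ∀ x ∈ X, ⟪u - P u, x - P u⟫ ≤ 0)
    {y₁ y₂ : E} (h : ⟪y₂ - P y₁, y₁ - P y₁⟫ ≤ 0) :
    infDist y₂ X ≤ ‖y₂ - P y₁‖ *
      ‖‖y₂ - P y₂‖⁻¹ • (y₂ - P y₂) - ‖y₁ - P y₁‖⁻¹ • (y₁ - P y₁)‖ := by
  set u := ‖y₂ - P y₂‖⁻¹ • (y₂ - P y₂)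
  set v := ‖y₁ - P y₁‖⁻¹ • (y₁ - P y₁)
  have hnorm : ‖y₂ - P y₂‖ = ⟪y₂ - P y₂, u⟫ := by
    rcases eq_or_ne (y₂ - P y₂) 0 with h0 | h0
    · simp [u, h0]
    · rw [real_inner_smul_right, real_inner_self_eq_norm_sq]
      field_simp
  have hu : ⟪P y₁ - P y₂, u⟫ ≤ 0 := inner_sub_proj_smul_nonpos hP y₂ (hP y₁).1
  have hv : ⟪y₂ - P y₁, v⟫ ≤ 0 := by
    rw [real_inner_smul_right]
    exact mul_nonpos_of_nonneg_of_nonpos (by positivity) h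
  calc infDist y₂ X = ⟪y₂ - P y₂, u⟫ := by rw [infDist_eq_norm_sub_proj hP, hnorm]
    _ = ⟪y₂ - P y₁, v⟫ + ⟪y₂ - P y₁, u - v⟫ + ⟪P y₁ - P y₂, u⟫ := by
      rw [← inner_add_right, add_sub_cancel, ← inner_add_left, sub_add_sub_cancel]
    _ ≤ ‖y₂ - P y₁‖ * ‖u - v‖ := by linarith [real_inner_le_norm (y₂ - P y₁) (u - v)]

end Projection

section Normal

variable {E : Type*} [NormedAddCommGroup E] [InnerProductSpace ℝ E] {X : Set E}

lemma inner_sub_le_neg_of_closedBall_subset {x₀ q v : E} {r : ℝ} (hr : 0 ≤ r)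
    (hball : closedBall x₀ r ⊆ X) (hv1 : ‖v‖ = 1) (hv : ∀ x ∈ X, ⟪x - q, v⟫ ≤ 0) :
    ⟪x₀ - q, v⟫ ≤ -r := by
  have hmem : x₀ + r • v ∈ X :=
    hball (by simp [dist_eq_norm, norm_smul, hv1, abs_of_nonneg hr])
  have h := hv _ hmem
  rw [add_sub_right_comm, inner_add_left, real_inner_smul_left, real_inner_self_eq_norm_sq,
    hv1] at h
  linarith

lemma mem_frontier_of_unit_normal {q v : E} (hq : q ∈ X) (hv1 : ‖v‖ = 1)
    (hv : ∀ x ∈ X, ⟪x - q, v⟫ ≤ 0) : q ∈ frontier X := by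
  refine ⟨subset_closure hq, fun hint => ?_⟩
  obtain ⟨r, hr, hball⟩ := nhds_basis_closedBall.mem_iff.1 (mem_interior_iff_mem_nhds.1 hint)
  have := inner_sub_le_neg_of_closedBall_subset hr.le hball hv1 hv
  rw [sub_self, inner_zero_left] at this
  linarith

lemma eq_or_eq_neg_of_eq_smul {u v : E} {c : ℝ} (hv1 : ‖v‖ = 1) (hv : v = c • u) :
    v = ‖u‖⁻¹ • u ∨ v = -(‖u‖⁻¹ • u) := by
  have hcu : |c| * ‖u‖ = 1 := by rw [← hv1, hv, norm_smul, Real.norm_eq_abs]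
  have hc : |c| = ‖u‖⁻¹ := eq_inv_of_mul_eq_one_left hcu
  rcases abs_choice c with h | h
  · left; rw [hv, show c = ‖u‖⁻¹ by linarith]
  · right; rw [hv, show c = -‖u‖⁻¹ by linarith, neg_smul]

variable [CompleteSpace E] {g : E → ℝ}

/-- A unit outer normal `v` at `q` makes `q` a maximizer of `⟪v, ·⟫` on the level set of `g`
through `q`, so Lagrange multipliers make it parallel to `∇ g q`. -/
lemma exists_eq_smul_gradient_of_normal {U : Set E} {q v : E} (hg : ContDiffAt ℝ 1 g q)
    (hU : U ∈ 𝓝 q) (hlevel : ∀ x ∈ U, g x = g q → x ∈ X) (hq : fderiv ℝ g q ≠ 0)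
    (hv : ∀ x ∈ X, ⟪x - q, v⟫ ≤ 0) : ∃ c : ℝ, v = c • ∇ g q := by
  have hmax : IsLocalMaxOn (fun x => ⟪v, x⟫) {x | g x = g q} q :=
    eventually_nhdsWithin_iff.2 <| Filter.mem_of_superset hU fun x hxU hx => by
      have := hv x (hlevel x hxU hx)
      rw [real_inner_comm, inner_sub_right] at this
      exact sub_nonpos.1 this
  obtain ⟨a, b, hab, hsum⟩ :=
    IsLocalExtrOn.exists_multipliers_of_hasStrictFDerivAt_1d (Or.inr hmax)
      (hg.hasStrictFDerivAt one_ne_zero) (innerSL ℝ v).hasStrictFDerivAt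
  have hb : b ≠ 0 := by
    rintro rfl
    have ha : a ≠ 0 := fun ha => hab (by simp [ha])
    exact hq (smul_eq_zero.1 (by simpa using hsum) |>.resolve_left ha)
  refine ⟨-(a / b), ext_inner_right ℝ fun x => ?_⟩
  have := congrArg (fun L => L x) hsum
  simp only [add_apply, smul_apply, innerSL_apply_apply, zero_apply, smul_eq_mul] at this
  rw [real_inner_smul_left, gradient, InnerProductSpace.toDual_symm_apply]
  field_simp
  linarith

lemma eq_or_eq_neg_of_unit_normal {U : Set E} {q v : E} (hXc : IsClosed X)
    (hg : ContDiff ℝ 1 g) (hbd : frontier X ∩ U = {x ∈ U | g x = 0}) (hU : U ∈ 𝓝 q)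
    (hq : fderiv ℝ g q ≠ 0) (hqX : q ∈ X) (hv1 : ‖v‖ = 1) (hv : ∀ x ∈ X, ⟪x - q, v⟫ ≤ 0) :
    v = ‖∇ g q‖⁻¹ • ∇ g q ∨ v = -(‖∇ g q‖⁻¹ • ∇ g q) := by
  have hgq : g q = 0 := by
    have : q ∈ frontier X ∩ U := ⟨mem_frontier_of_unit_normal hqX hv1 hv, mem_of_mem_nhds hU⟩
    rw [hbd] at this
    exact this.2
  have hlevel : ∀ x ∈ U, g x = g q → x ∈ X := fun x hxU hx => by
    have : x ∈ {x ∈ U | g x = 0} := ⟨hxU, hx.trans hgq⟩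
    rw [← hbd] at this
    exact hXc.frontier_subset this.1
  obtain ⟨c, hc⟩ := exists_eq_smul_gradient_of_normal hg.contDiffAt hU hlevel hq hv
  exact eq_or_eq_neg_of_eq_smul hv1 hc

/-- The two unit normals `± ∇ g / ‖∇ g‖` are told apart by an interior point `x₀`: the outer one
satisfies `⟪x₀ - q, v⟫ ≤ -r`. Fixing the sign at `z` gives a field that is continuous at `z`. -/
lemma exists_continuousAt_eq_of_unit_normal {U : Set E} {z : E} (hXc : IsClosed X)
    (hX : (interior X).Nonempty) (hg : ContDiff ℝ 1 g) (hU : U ∈ 𝓝 z)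
    (hbd : frontier X ∩ U = {x ∈ U | g x = 0}) (hgrad : ∀ x ∈ U, fderiv ℝ g x ≠ 0) :
    ∃ M : E → E, ContinuousAt M z ∧ ∀ᶠ q in 𝓝 z, ∀ v, q ∈ X → ‖v‖ = 1 →
      (∀ x ∈ X, ⟪x - q, v⟫ ≤ 0) → v = M q := by
  obtain ⟨x₀, hx₀⟩ := hX
  obtain ⟨r, hr, hball⟩ := nhds_basis_closedBall.mem_iff.1 (mem_interior_iff_mem_nhds.1 hx₀)
  set N : E → E := fun q => ‖∇ g q‖⁻¹ • ∇ g q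
  have hNc : ContinuousAt N z := by
    have hgrad_cont : Continuous (∇ g) :=
      (InnerProductSpace.toDual ℝ E).symm.continuous.comp (hg.continuous_fderiv one_ne_zero)
    have hz : ∇ g z ≠ 0 := fun h =>
      hgrad z (mem_of_mem_nhds hU) ((LinearIsometryEquiv.map_eq_zero_iff _).1 h)
    exact (hgrad_cont.continuousAt.norm.inv₀ (norm_ne_zero_iff.2 hz)).smul
      hgrad_cont.continuousAt
  obtain ⟨σ, hσ, hσz⟩ : ∃ σ : ℝ, (σ = 1 ∨ σ = -1) ∧ σ * ⟪x₀ - z, N z⟫ ≤ 0 := by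
    rcases le_total ⟪x₀ - z, N z⟫ 0 with h | h
    · exact ⟨1, .inl rfl, by linarith⟩
    · exact ⟨-1, .inr rfl, by linarith⟩
  have hMc : ContinuousAt (fun q => σ • N q) z := continuousAt_const.smul hNc
  have hsmall : ∀ᶠ q in 𝓝 z, ⟪x₀ - q, σ • N q⟫ < r :=
    (continuousAt_const.sub continuousAt_id).inner hMc |>.eventually_lt continuousAt_const
      (by simpa [real_inner_smul_right] using hσz.trans_lt hr)
  refine ⟨fun q => σ • N q, hMc, ?_⟩
  filter_upwards [hsmall, eventually_mem_nhds_iff.2 hU, hU] with q hq hUq hqU v hqX hv1 hv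
  have hout := inner_sub_le_neg_of_closedBall_subset hr.le hball hv1 hv
  have hpm : v = σ • N q ∨ v = -(σ • N q) := by
    rcases eq_or_eq_neg_of_unit_normal hXc hg hbd hUq (hgrad q hqU) hqX hv1 hv with h | h <;>
      rcases hσ with rfl | rfl <;> simp [h, N]
  refine hpm.resolve_right fun h => ?_
  rw [h, inner_neg_right] at hout
  linarith

end Normal

section Centralized

variable {E : Type*} [NormedAddCommGroup E] [InnerProductSpace ℝ E] {X : Set E} {P : E → E}
  {ι : Type*} {l : Filter ι}

lemma norm_smul_sub_proj_eq_one (hP : ∀ u, P u ∈ X ∧ ∀ x ∈ X, ⟪u - P u, x - P u⟫ ≤ 0)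
    {y : E} (hy : y ∉ X) : ‖‖y - P y‖⁻¹ • (y - P y)‖ = 1 := by
  have hne : y - P y ≠ 0 := fun h => hy (sub_eq_zero.1 h ▸ (hP y).1)
  simpa using norm_smul_inv_norm (𝕜 := ℝ) hne

lemma isLittleO_infDist_of_inner_nonpos
    (hP : ∀ u, P u ∈ X ∧ ∀ x ∈ X, ⟪u - P u, x - P u⟫ ≤ 0) {M : E → E} {z : E} (hz : z ∈ X)
    (hMc : ContinuousAt M z)
    (hM : ∀ᶠ q in 𝓝 z, ∀ v, q ∈ X → ‖v‖ = 1 → (∀ x ∈ X, ⟪x - q, v⟫ ≤ 0) → v = M q)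
    {y₁ y₂ : ι → E} (hy₁ : Tendsto y₁ l (𝓝 z)) (hy₂ : Tendsto y₂ l (𝓝 z))
    (hy₁X : ∀ k, y₁ k ∉ X) (hhalf : ∀ k, ⟪y₂ k - P (y₁ k), y₁ k - P (y₁ k)⟫ ≤ 0) :
    (fun k => infDist (y₂ k) X) =o[l] fun k => ‖y₂ k - P (y₁ k)‖ := by
  have ha := (tendsto_proj_nhds hP hz).comp hy₁
  have hp := (tendsto_proj_nhds hP hz).comp hy₂
  have hB : Tendsto (fun k => ‖M (P (y₂ k)) - M (P (y₁ k))‖) l (𝓝 0) := by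
    simpa using ((hMc.tendsto.comp hp).sub (hMc.tendsto.comp ha)).norm
  have hbound : ∀ᶠ k in l,
      infDist (y₂ k) X ≤ ‖y₂ k - P (y₁ k)‖ * ‖M (P (y₂ k)) - M (P (y₁ k))‖ := by
    filter_upwards [hp.eventually hM, ha.eventually hM] with k hMp hMa
    by_cases hy₂X : y₂ k ∈ X
    · rw [infDist_zero_of_mem hy₂X]
      positivity
    · have h := infDist_le_norm_mul_norm_sub hP (hhalf k)
      rwa [hMp _ (hP _).1 (norm_smul_sub_proj_eq_one hP hy₂X)
          fun x hx => inner_sub_proj_smul_nonpos hP _ hx,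
        hMa _ (hP _).1 (norm_smul_sub_proj_eq_one hP (hy₁X k))
          fun x hx => inner_sub_proj_smul_nonpos hP _ hx] at h
  have hsmall : (fun k => ‖y₂ k - P (y₁ k)‖ * ‖M (P (y₂ k)) - M (P (y₁ k))‖) =o[l]
      fun k => ‖y₂ k - P (y₁ k)‖ := by
    simpa only [mul_one] using (isBigO_refl _ l).mul_isLittleO ((isLittleO_one_iff ℝ).2 hB)
  refine (IsBigO.of_bound 1 ?_).trans_isLittleO hsmall
  filter_upwards [hbound] with k hk
  rw [Real.norm_of_nonneg infDist_nonneg, one_mul, Real.norm_of_nonneg (by positivity)]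
  exact hk

lemma isLittleO_infDist_of_norm_sub_le_infDist
    (hP : ∀ u, P u ∈ X ∧ ∀ x ∈ X, ⟪u - P u, x - P u⟫ ≤ 0) {M : E → E} {z : E} (hz : z ∈ X)
    (hMc : ContinuousAt M z)
    (hM : ∀ᶠ q in 𝓝 z, ∀ v, q ∈ X → ‖v‖ = 1 → (∀ x ∈ X, ⟪x - q, v⟫ ≤ 0) → v = M q)
    {S : Set E} (hS : S ⊆ X) (hSne : S.Nonempty)
    {w c : ι → E} (hw : Tendsto w l (𝓝 z)) (hc : Tendsto c l (𝓝 z))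
    (hwX : ∀ k, w k ∉ X) (hhalf : ∀ k, ⟪c k - P (w k), w k - P (w k)⟫ ≤ 0)
    (hwc : ∀ k, ‖w k - c k‖ ≤ infDist (w k) S) :
    (fun k => infDist (c k) X) =o[l] fun k => infDist (w k) S := by
  refine (isLittleO_infDist_of_inner_nonpos hP hz hMc hM hw hc hwX hhalf).trans_isBigO
    (IsBigO.of_bound 2 (Eventually.of_forall fun k => ?_))
  have hwP : ‖w k - P (w k)‖ ≤ infDist (w k) S := by
    rw [← infDist_eq_norm_sub_proj hP]
    exact infDist_le_infDist_of_subset hS hSne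
  rw [norm_norm, Real.norm_of_nonneg infDist_nonneg]
  calc ‖c k - P (w k)‖ ≤ ‖w k - c k‖ + ‖w k - P (w k)‖ :=
        (norm_sub_le_norm_sub_add_norm_sub _ (w k) _).trans_eq (by rw [norm_sub_rev])
    _ ≤ 2 * infDist (w k) S := by linarith [hwc k]

end Centralized

theorem stmt_19_general {n : ℕ} {X Y : Set (EuclideanSpace ℝ (Fin n))}
    (hXc : IsClosed X)
    (hYc : IsClosed Y)
    (hSint : (interior (X ∩ Y)).Nonempty)
    (PX PY : EuclideanSpace ℝ (Fin n) → EuclideanSpace ℝ (Fin n))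
    (hPX : ∀ u, PX u ∈ X ∧ ∀ x ∈ X, ⟪u - PX u, x - PX u⟫ ≤ 0)
    (hPY : ∀ u, PY u ∈ Y ∧ ∀ x ∈ Y, ⟪u - PY u, x - PY u⟫ ≤ 0)
    (zbar : EuclideanSpace ℝ (Fin n)) (hzbar : zbar ∈ frontier X ∩ frontier Y)
    -- C¹ smoothness of the boundaries near zbar:
    (U : Set (EuclideanSpace ℝ (Fin n))) (hU : U ∈ 𝓝 zbar)
    (gX gY : EuclideanSpace ℝ (Fin n) → ℝ)
    (hgX : ContDiff ℝ 1 gX) (hgY : ContDiff ℝ 1 gY)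
    (hXbd : frontier X ∩ U = {x ∈ U | gX x = 0})
    (hYbd : frontier Y ∩ U = {x ∈ U | gY x = 0})
    (hgradX : ∀ x ∈ U, fderiv ℝ gX x ≠ 0)
    (hgradY : ∀ x ∈ U, fderiv ℝ gY x ≠ 0)
    -- local error bound (implied by nonempty interior of S):
    (V : Set (EuclideanSpace ℝ (Fin n))) (hV : V ∈ 𝓝 zbar)
    (ω : ℝ) (hω : ω ∈ Set.Ioo (0:ℝ) 1)
    (hEB : ∀ v ∈ V, ω * infDist v (X ∩ Y) ≤ max (infDist v X) (infDist v Y))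
    -- PCRM on strictly centralized points:
    (C : EuclideanSpace ℝ (Fin n) → EuclideanSpace ℝ (Fin n))
    (hC : ∀ w : EuclideanSpace ℝ (Fin n), ⟪w - PX w, w - PY w⟫ < 0 →
      C w ∈ {v | ⟪v - PX w, w - PX w⟫ ≤ 0} ∩ {v | ⟪v - PY w, w - PY w⟫ ≤ 0} ∧
      ∀ v ∈ {v | ⟪v - PX w, w - PX w⟫ ≤ 0} ∩ {v | ⟪v - PY w, w - PY w⟫ ≤ 0},
        ⟪w - C w, v - C w⟫ ≤ 0)
    (w : ℕ → EuclideanSpace ℝ (Fin n))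
    (hwsc : ∀ k, ⟪w k - PX (w k), w k - PY (w k)⟫ < 0)
    (hwlim : Tendsto w atTop (𝓝 zbar)) :
    Tendsto (fun k => infDist (C (w k)) (X ∩ Y) / infDist (w k) (X ∩ Y))
      atTop (𝓝 0) := by
  
  have hzX : zbar ∈ X := hXc.frontier_subset hzbar.1
  have hzY : zbar ∈ Y := hYc.frontier_subset hzbar.2
  have hzS : zbar ∈ X ∩ Y := ⟨hzX, hzY⟩
  have hSne : (X ∩ Y).Nonempty := ⟨zbar, hzS⟩
  obtain ⟨MX, hMXc, hMX⟩ := exists_continuousAt_eq_of_unit_normal hXc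
    (hSint.mono (interior_mono Set.inter_subset_left)) hgX hU hXbd hgradX
  obtain ⟨MY, hMYc, hMY⟩ := exists_continuousAt_eq_of_unit_normal hYc
    (hSint.mono (interior_mono Set.inter_subset_right)) hgY hU hYbd hgradY
  have hwX : ∀ k, w k ∉ X := fun k hk => by
    simpa [proj_eq_self hPX hk] using hwsc k
  have hwY : ∀ k, w k ∉ Y := fun k hk => by
    simpa [proj_eq_self hPY hk] using hwsc k
  have hwC : ∀ k, ‖w k - C (w k)‖ ≤ infDist (w k) (X ∩ Y) := fun k =>
    norm_sub_le_infDist_of_inner_nonpos hSne fun x hx => (hC _ (hwsc k)).2 x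
      ⟨(real_inner_comm _ _).trans_le ((hPX _).2 x hx.1),
        (real_inner_comm _ _).trans_le ((hPY _).2 x hx.2)⟩
  have hd : Tendsto (fun k => infDist (w k) (X ∩ Y)) atTop (𝓝 0) := by
    simpa [Function.comp_def, infDist_zero_of_mem hzS] using
      ((continuous_infDist_pt (X ∩ Y)).tendsto zbar).comp hwlim
  have hCw : Tendsto (fun k => C (w k)) atTop (𝓝 zbar) := by
    simpa using hwlim.sub (squeeze_zero_norm hwC hd)
  have hXo := isLittleO_infDist_of_norm_sub_le_infDist hPX hzX hMXc hMX Set.inter_subset_left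
    hSne hwlim hCw hwX (fun k => (hC _ (hwsc k)).1.1) hwC
  have hYo := isLittleO_infDist_of_norm_sub_le_infDist hPY hzY hMYc hMY Set.inter_subset_right
    hSne hwlim hCw hwY (fun k => (hC _ (hwsc k)).1.2) hwC
  have hSX : (fun k => infDist (C (w k)) (X ∩ Y)) =O[atTop]
      fun k => infDist (C (w k)) X + infDist (C (w k)) Y := by
    refine IsBigO.of_bound ω⁻¹ ?_
    filter_upwards [hCw hV] with k hk
    rw [Real.norm_of_nonneg infDist_nonneg,
      Real.norm_of_nonneg (add_nonneg infDist_nonneg infDist_nonneg), le_inv_mul_iff₀ hω.1]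
    exact (hEB _ hk).trans (max_le_add_of_nonneg infDist_nonneg infDist_nonneg)
  exact (hSX.trans_isLittleO (hXo.add hYo)).tendsto_div_nhds_zero

/-- near \`zbar\` the boundaries of X and Y are C¹ manifolds of
dimension n-1, formalized as zero level sets (within a neighborhood U) of C¹
functions with nonvanishing derivative; for strictly centralized points, PCRM
is the projection onto the intersection of the two supporting half-spaces. -/
theorem stmt_19 {n : ℕ} {X Y : Set (EuclideanSpace ℝ (Fin n))}
    (hXc : IsClosed X) (hXconv : Convex ℝ X)
    (hYc : IsClosed Y) (hYconv : Convex ℝ Y)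
    (hSint : (interior (X ∩ Y)).Nonempty)
    (PX PY : EuclideanSpace ℝ (Fin n) → EuclideanSpace ℝ (Fin n))
    (hPX : ∀ u, PX u ∈ X ∧ ∀ x ∈ X, ⟪u - PX u, x - PX u⟫ ≤ 0)
    (hPY : ∀ u, PY u ∈ Y ∧ ∀ x ∈ Y, ⟪u - PY u, x - PY u⟫ ≤ 0)
    (zbar : EuclideanSpace ℝ (Fin n)) (hzbar : zbar ∈ frontier X ∩ frontier Y)
    -- C¹ smoothness of the boundaries near zbar:
    (U : Set (EuclideanSpace ℝ (Fin n))) (hU : U ∈ 𝓝 zbar)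
    (gX gY : EuclideanSpace ℝ (Fin n) → ℝ)
    (hgX : ContDiff ℝ 1 gX) (hgY : ContDiff ℝ 1 gY)
    (hXbd : frontier X ∩ U = {x ∈ U | gX x = 0})
    (hYbd : frontier Y ∩ U = {x ∈ U | gY x = 0})
    (hgradX : ∀ x ∈ U, fderiv ℝ gX x ≠ 0)
    (hgradY : ∀ x ∈ U, fderiv ℝ gY x ≠ 0)
    -- local error bound (implied by nonempty interior of S):
    (V : Set (EuclideanSpace ℝ (Fin n))) (hV : V ∈ 𝓝 zbar)
    (ω : ℝ) (hω : ω ∈ Set.Ioo (0:ℝ) 1)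
    (hEB : ∀ v ∈ V, ω * infDist v (X ∩ Y) ≤ max (infDist v X) (infDist v Y))
    -- PCRM on strictly centralized points:
    (C : EuclideanSpace ℝ (Fin n) → EuclideanSpace ℝ (Fin n))
    (hC : ∀ w : EuclideanSpace ℝ (Fin n), ⟪w - PX w, w - PY w⟫ < 0 →
      C w ∈ {v | ⟪v - PX w, w - PX w⟫ ≤ 0} ∩ {v | ⟪v - PY w, w - PY w⟫ ≤ 0} ∧
      ∀ v ∈ {v | ⟪v - PX w, w - PX w⟫ ≤ 0} ∩ {v | ⟪v - PY w, w - PY w⟫ ≤ 0},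
        ⟪w - C w, v - C w⟫ ≤ 0)
    (w : ℕ → EuclideanSpace ℝ (Fin n))
    (hwsc : ∀ k, ⟪w k - PX (w k), w k - PY (w k)⟫ < 0)
    (hwlim : Tendsto w atTop (𝓝 zbar)) :
    Tendsto (fun k => infDist (C (w k)) (X ∩ Y) / infDist (w k) (X ∩ Y))
      atTop (𝓝 0) :=
  stmt_19_general hXc hYc hSint PX PY hPX hPY zbar hzbar U hU gX gY hgX hgY hXbd hYbd hgradX hgradY
    V hV ω hω hEB C hC w hwsc hwlim
end
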